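/- Let f : X → X be a homeomorphism of a topological space X and let r be a nonzero integer. Then f is orbit expansive if and only if f^r is orbit expansive. -/

import Mathlib

open Set

/-- The `n`-th iterate (`n : ℤ`) of a homeomorphism `f`, as a function. -/
def Homeomorph.zpow {X : Type*} [TopologicalSpace X] (f : X ≃ₜ X) (n : ℤ) : X → X :=
  ⇑(f.toEquiv ^ n)

/-- `U = {U 0, …, U (l-1)}` is an o-expansive covering for the homeomorphism `f`:
it is a finite open cover such that any two points whose whole orbits stay
`U`-close must coincide. -/
def IsOExpansiveCover {X : Type*} [TopologicalSpace X] {l : ℕ} (f : X ≃ₜ X)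
    (U : Fin l → Set X) : Prop :=
  (∀ i, IsOpen (U i)) ∧ (⋃ i, U i) = Set.univ ∧
    ∀ x y : X, (∀ n : ℤ, ∃ i, f.zpow n x ∈ U i ∧ f.zpow n y ∈ U i) → x = y

/-- A homeomorphism is orbit expansive if it admits an o-expansive covering. -/
def OrbitExpansive {X : Type*} [TopologicalSpace X] (f : X ≃ₜ X) : Prop :=
  ∃ (l : ℕ) (U : Fin l → Set X), IsOExpansiveCover f U

/-- `U` is an r-expansivity covering for `f`: a finite open cover such that for every
open cover `V` and every sequence `k : ℤ → Fin n` there is `N` with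
`⋂_{|j| ≤ N} f^j(U (k j))` contained in a member of `V`. -/
def IsRExpansiveCover {X : Type*} [TopologicalSpace X] {n : ℕ} (f : X ≃ₜ X)
    (U : Fin n → Set X) : Prop :=
  (∀ i, IsOpen (U i)) ∧ (⋃ i, U i) = Set.univ ∧
    ∀ V : Set (Set X), (∀ v ∈ V, IsOpen v) → ⋃₀ V = Set.univ →
      ∀ k : ℤ → Fin n, ∃ N : ℕ, ∃ v ∈ V,
        (⋂ j ∈ Set.Icc (-(N : ℤ)) (N : ℤ), f.zpow j '' U (k j)) ⊆ v

/-- A homeomorphism is refinement expansive if it admits an r-expansivity covering. -/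
def RefinementExpansive {X : Type*} [TopologicalSpace X] (f : X ≃ₜ X) : Prop :=
  ∃ (n : ℕ) (U : Fin n → Set X), IsRExpansiveCover f U

/-- `U` is a uniform r-expansivity covering for `f`: `N` can be chosen uniformly in the
sequence `k`. -/
def IsUniformRExpansiveCover {X : Type*} [TopologicalSpace X] {n : ℕ} (f : X ≃ₜ X)
    (U : Fin n → Set X) : Prop :=
  (∀ i, IsOpen (U i)) ∧ (⋃ i, U i) = Set.univ ∧
    ∀ V : Set (Set X), (∀ v ∈ V, IsOpen v) → ⋃₀ V = Set.univ →
      ∃ N : ℕ, ∀ k : ℤ → Fin n, ∃ v ∈ V,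
        (⋂ j ∈ Set.Icc (-(N : ℤ)) (N : ℤ), f.zpow j '' U (k j)) ⊆ v

/-- A homeomorphism is uniformly refinement expansive if it admits a uniform
r-expansivity covering. -/
def UniformlyRefinementExpansive {X : Type*} [TopologicalSpace X] (f : X ≃ₜ X) : Prop :=
  ∃ (n : ℕ) (U : Fin n → Set X), IsUniformRExpansiveCover f U

/-! Every `f^r`-orbit is a subsequence of the corresponding `f`-orbit, so an o-expansive
covering for `f^r` is one for `f`. Conversely, if `U` is o-expansive for `f` and `s = |r|`,
the common refinement of `U, f⁻¹U, …, f^{-(s-1)}U` is o-expansive for `f^r`: every time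
is `m = r n + j` with `0 ≤ j < s`, and the refinement records where `f^j` sends `f^{rn} x`. -/

namespace Homeomorph

variable {X : Type*} [TopologicalSpace X]

def toPermHom : (X ≃ₜ X) →* Equiv.Perm X where
  toFun := Homeomorph.toEquiv
  map_one' := rfl
  map_mul' _ _ := rfl

theorem zpow_eq_coe_zpow (f : X ≃ₜ X) (n : ℤ) : f.zpow n = ⇑(f ^ n) :=
  congrArg DFunLike.coe (map_zpow toPermHom f n).symm

end Homeomorph

section OrbitExpansive

variable {X : Type*} [TopologicalSpace X] {ι : Type*}

theorem OrbitExpansive.of_finite [Finite ι] {f : X ≃ₜ X} (U : ι → Set X)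
    (hopen : ∀ i, IsOpen (U i)) (hcover : ⋃ i, U i = univ)
    (hsep : ∀ x y : X, (∀ n : ℤ, ∃ i, (f ^ n) x ∈ U i ∧ (f ^ n) y ∈ U i) → x = y) :
    OrbitExpansive f := by
  obtain ⟨l, ⟨e⟩⟩ := Finite.exists_equiv_fin ι
  refine ⟨l, U ∘ e.symm, fun i => hopen _, ?_, fun x y hxy => hsep x y fun n => ?_⟩
  · rw [← hcover]
    exact e.symm.surjective.iUnion_comp U
  · obtain ⟨i, hx, hy⟩ := hxy n
    rw [Homeomorph.zpow_eq_coe_zpow] at hx hy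
    exact ⟨e.symm i, hx, hy⟩

theorem OrbitExpansive.of_zpow {f : X ≃ₜ X} {r : ℤ} (h : OrbitExpansive (f ^ r)) :
    OrbitExpansive f := by
  obtain ⟨l, U, hopen, hcover, hsep⟩ := h
  refine ⟨l, U, hopen, hcover, fun x y hxy => hsep x y fun n => ?_⟩
  simpa only [Homeomorph.zpow_eq_coe_zpow, ← zpow_mul] using hxy (r * n)

def iterateRefinement (f : X ≃ₜ X) (U : ι → Set X) (s : ℕ) (c : Fin s → ι) : Set X :=
  ⋂ j : Fin s, ⇑(f ^ (j : ℤ)) ⁻¹' U (c j)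

section iterateRefinement

variable {f : X ≃ₜ X} {U : ι → Set X} {s : ℕ}

theorem mem_iterateRefinement {c : Fin s → ι} {x : X} :
    x ∈ iterateRefinement f U s c ↔ ∀ j : Fin s, (f ^ (j : ℤ)) x ∈ U (c j) := by
  simp only [iterateRefinement, mem_iInter, mem_preimage]

theorem isOpen_iterateRefinement (hopen : ∀ i, IsOpen (U i)) (c : Fin s → ι) :
    IsOpen (iterateRefinement f U s c) :=
  isOpen_iInter_of_finite fun j => (hopen _).preimage (f ^ (j : ℤ)).continuous

theorem iUnion_iterateRefinement (hcover : ⋃ i, U i = univ) :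
    ⋃ c, iterateRefinement f U s c = univ := by
  refine eq_univ_of_forall fun x => mem_iUnion.2 ?_
  choose c hc using fun j : Fin s => mem_iUnion.1 (hcover ▸ mem_univ ((f ^ (j : ℤ)) x))
  exact ⟨c, mem_iterateRefinement.2 hc⟩

theorem exists_mem_of_forall_mem_iterateRefinement {r : ℤ} (hr : r ≠ 0) {x y : X}
    (hxy : ∀ n : ℤ, ∃ c, ((f ^ r) ^ n) x ∈ iterateRefinement f U r.natAbs c ∧
      ((f ^ r) ^ n) y ∈ iterateRefinement f U r.natAbs c) (m : ℤ) :
    ∃ i, (f ^ m) x ∈ U i ∧ (f ^ m) y ∈ U i := by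
  have hdiv : r * (m / r) + m % r = m := Int.mul_ediv_add_emod m r
  have hnonneg : 0 ≤ m % r := Int.emod_nonneg m hr
  have hlt : m % r < r.natAbs := Int.emod_lt m hr
  let j : Fin r.natAbs := ⟨(m % r).toNat, by omega⟩
  have hm : f ^ m = f ^ (j : ℤ) * (f ^ r) ^ (m / r) := by
    rw [← zpow_mul, ← zpow_add]
    congr 1
    simp only [j, Int.toNat_of_nonneg hnonneg]
    omega
  obtain ⟨c, hx, hy⟩ := hxy (m / r)
  exact ⟨c j, by rw [hm]; exact mem_iterateRefinement.1 hx j,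
    by rw [hm]; exact mem_iterateRefinement.1 hy j⟩

end iterateRefinement

theorem OrbitExpansive.zpow {f : X ≃ₜ X} {r : ℤ} (hr : r ≠ 0) (h : OrbitExpansive f) :
    OrbitExpansive (f ^ r) := by
  obtain ⟨l, U, hopen, hcover, hsep⟩ := h
  refine .of_finite (iterateRefinement f U r.natAbs) (isOpen_iterateRefinement hopen)
    (iUnion_iterateRefinement hcover) fun x y hxy => hsep x y fun m => ?_
  simpa only [Homeomorph.zpow_eq_coe_zpow] using
    exists_mem_of_forall_mem_iterateRefinement hr hxy m

end OrbitExpansive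

/-- Proposition 2.14: for a nonzero integer `r`, a homeomorphism `f` is orbit
expansive iff its `r`-th power (here: any homeomorphism `g` whose underlying map is
`f^r`) is orbit expansive. -/
theorem orbitExpansive_iff_zpow {X : Type*} [TopologicalSpace X]
    (f g : X ≃ₜ X) (r : ℤ) (hr : r ≠ 0) (hg : ⇑g = f.zpow r) :
    OrbitExpansive f ↔ OrbitExpansive g := by
  obtain rfl : g = f ^ r := DFunLike.coe_injective (hg.trans (f.zpow_eq_coe_zpow r))
  exact ⟨OrbitExpansive.zpow hr, OrbitExpansive.of_zpow⟩
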